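/- Let c ∈ H_ℚ ⊗̂_{R_ℚ} H_ℚ be symmetric (τ(c) = c) and satisfy (id ⊗ ε)c = 0 = (ε ⊗ id)c, and let 𝔊 denote the series c + x⊗1 + 1⊗x. Then the series Θ(x) = −(μ ∘ (id ⊗ S))(c) − x ∈ H_ℚ[[x]] is an inverse element for 𝔊: both ((μ ∘ (id ⊗ S))𝔊)(x, Θ(x)) = 0 and ((μ ∘ (S ⊗ id))𝔊)(Θ(x), x) = 0, where (μ ∘ (id ⊗ S))𝔊 (respectively (μ ∘ (S ⊗ id))𝔊) denotes the one-variable-pair series obtained by applying μ ∘ (id ⊗ S) (respectively μ ∘ (S ⊗ id)) to all coefficients of 𝔊; in particular (μ ∘ (id ⊗ S))(c) = (μ ∘ (S ⊗ id))(c). -/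

import Mathlib

/-!
Since `S 1 = 1`, the contraction `μ ∘ (id ⊗ S)` applied coefficientwise keeps the series
`𝔊 = c + x⊗1 + 1⊗x` affine: it becomes `μS(c) + x⊗1 + 1⊗x`, and substituting `(x, Θ)` gives
`μS(c) + x + Θ = 0`. The same holds for `μ ∘ (S ⊗ id) = μ ∘ (id ⊗ S) ∘ τ`, which agrees with
`μ ∘ (id ⊗ S)` on the `τ`-symmetric element `c`.
-/

open scoped TensorProduct

noncomputable section

namespace FGHopf

variable {A B : Type*} [CommRing A] [CommRing B] {σ : Type*}

/-- Apply a map to all coefficients of a (multivariate) power series. -/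
def mapCoeffs (f : A → B) (F : MvPowerSeries σ A) : MvPowerSeries σ B :=
  fun m => f (F m)

/-- Substitution of two power series `G`, `K` into a two-variable power series `w`
(the mathematically correct substitution whenever the relevant family of coefficients
is finitely supported, e.g. when `G` and `K` have zero constant term or `w` is a
polynomial). -/
def subst2 (w : MvPowerSeries (Fin 2) A) (G K : MvPowerSeries σ A) :
    MvPowerSeries σ A :=
  fun m => ∑ᶠ p : ℕ × ℕ,
    MvPowerSeries.coeff (R := A) (Finsupp.single 0 p.1 + Finsupp.single 1 p.2) w *
      MvPowerSeries.coeff (R := A) m (G ^ p.1 * K ^ p.2)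

/-- Substitution of a power series `G` into a one-variable power series `w`. -/
def subst1 (w : PowerSeries A) (G : MvPowerSeries σ A) : MvPowerSeries σ A :=
  fun m => ∑ᶠ n : ℕ, PowerSeries.coeff (R := A) n w * MvPowerSeries.coeff (R := A) m (G ^ n)

/-- Regard a two-variable series as a three-variable series in the first two variables,
mapping its coefficients by `f`. -/
def emb12 (f : A → B) (F : MvPowerSeries (Fin 2) A) : MvPowerSeries (Fin 3) B :=
  fun m => if m 2 = 0 then
    f (F (Finsupp.single 0 (m 0) + Finsupp.single 1 (m 1))) else 0

/-- Regard a two-variable series as a three-variable series in the last two variables,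
mapping its coefficients by `f`. -/
def emb23 (f : A → B) (F : MvPowerSeries (Fin 2) A) : MvPowerSeries (Fin 3) B :=
  fun m => if m 0 = 0 then
    f (F (Finsupp.single 0 (m 1) + Finsupp.single 1 (m 2))) else 0

/-- Regard a one-variable series as a two-variable series in the first variable `x⊗1`,
mapping its coefficients by `f`. -/
def inVar0 (f : A → B) (g : PowerSeries A) : MvPowerSeries (Fin 2) B :=
  fun m => if m 1 = 0 then f (PowerSeries.coeff (R := A) (m 0) g) else 0

/-- Regard a one-variable series as a two-variable series in the second variable `1⊗x`,
mapping its coefficients by `f`. -/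
def inVar1 (f : A → B) (g : PowerSeries A) : MvPowerSeries (Fin 2) B :=
  fun m => if m 0 = 0 then f (PowerSeries.coeff (R := A) (m 1) g) else 0

/-- Formal partial derivative of a multivariate power series with respect to the `i`-th
variable. -/
def pderiv (i : σ) (F : MvPowerSeries σ A) : MvPowerSeries σ A :=
  fun m => ((m i + 1 : ℕ) : A) * F (m + Finsupp.single i 1)

variable (R : Type*) [CommRing R] (H : Type*) [CommRing H] [HopfAlgebra R H]

/-- `id ⊗ ε : H ⊗ H → H`. -/
def idCounit : H ⊗[R] H →ₗ[R] H :=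
  (TensorProduct.rid R H).toLinearMap ∘ₗ
    LinearMap.lTensor H (Coalgebra.counit (R := R) (A := H))

/-- `ε ⊗ id : H ⊗ H → H`. -/
def counitId : H ⊗[R] H →ₗ[R] H :=
  (TensorProduct.lid R H).toLinearMap ∘ₗ
    LinearMap.rTensor H (Coalgebra.counit (R := R) (A := H))

/-- `Δ ⊗ id : H ⊗ H → H ⊗ H ⊗ H` (with the rightmost association). -/
def comulLeftTensor : H ⊗[R] H →ₗ[R] H ⊗[R] (H ⊗[R] H) :=
  (TensorProduct.assoc R H H H).toLinearMap ∘ₗ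
    LinearMap.rTensor H (Coalgebra.comul (R := R) (A := H))

/-- `id ⊗ Δ : H ⊗ H → H ⊗ H ⊗ H`. -/
def idTensorComul : H ⊗[R] H →ₗ[R] H ⊗[R] (H ⊗[R] H) :=
  LinearMap.lTensor H (Coalgebra.comul (R := R) (A := H))

/-- `a ↦ a ⊗ 1 : H ⊗ H → H ⊗ H ⊗ H`. -/
def incl12 : H ⊗[R] H →ₗ[R] H ⊗[R] (H ⊗[R] H) :=
  LinearMap.lTensor H ((TensorProduct.mk R H H).flip 1)

/-- `a ↦ 1 ⊗ a : H ⊗ H → H ⊗ H ⊗ H`. -/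
def incl23 : H ⊗[R] H →ₗ[R] H ⊗[R] (H ⊗[R] H) :=
  TensorProduct.mk R H (H ⊗[R] H) 1

/-- The flip `τ` of the two tensor factors of `H ⊗ H`. -/
def tau : H ⊗[R] H →ₗ[R] H ⊗[R] H := (TensorProduct.comm R H H).toLinearMap

/-- The unit axiom for a formal group `F` over the Hopf algebra `H`: applying `id ⊗ ε`
to all coefficients and setting the second variable to `0` yields the series `x`, and
symmetrically. -/
def UnitAxiom (F : MvPowerSeries (Fin 2) (H ⊗[R] H)) : Prop :=
  (∀ n : ℕ, idCounit R H (F (Finsupp.single 0 n)) = if n = 1 then 1 else 0) ∧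
  (∀ n : ℕ, counitId R H (F (Finsupp.single 1 n)) = if n = 1 then 1 else 0)

/-- The associativity axiom for a formal group `F` over the Hopf algebra `H`:
`((Δ ⊗ id)F)(F(x⊗1,1⊗x) ⊗ 1, 1⊗1⊗x) = ((id ⊗ Δ)F)(x⊗1⊗1, 1 ⊗ F(x⊗1,1⊗x))`. -/
def AssocAxiom (F : MvPowerSeries (Fin 2) (H ⊗[R] H)) : Prop :=
  subst2 (mapCoeffs (comulLeftTensor R H) F) (emb12 (incl12 R H) F)
      (MvPowerSeries.X 2) =
  subst2 (mapCoeffs (idTensorComul R H) F) (MvPowerSeries.X 0)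
      (emb23 (incl23 R H) F)

/-- The commutativity axiom: `F` is symmetric, `A_{i,j} = τ(A_{j,i})`. -/
def CommAxiom (F : MvPowerSeries (Fin 2) (H ⊗[R] H)) : Prop :=
  ∀ m : Fin 2 →₀ ℕ,
    F m = tau R H (F (Finsupp.single 0 (m 1) + Finsupp.single 1 (m 0)))

/-- A commutative formal group over the Hopf algebra `H`: a two-variable power series
with coefficients in `H ⊗ H`, with zero constant term, satisfying the unit,
associativity and commutativity axioms. -/
def IsCommFormalGroup (F : MvPowerSeries (Fin 2) (H ⊗[R] H)) : Prop :=
  F 0 = 0 ∧ UnitAxiom R H F ∧ AssocAxiom R H F ∧ CommAxiom R H F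

lemma coeff_C_add_X_add_X (a : A) (p : ℕ × ℕ) :
    MvPowerSeries.coeff (Finsupp.single 0 p.1 + Finsupp.single 1 p.2)
        (MvPowerSeries.C (σ := Fin 2) a + MvPowerSeries.X 0 + MvPowerSeries.X 1) =
      (if p = (0, 0) then a else 0) + (if p = (1, 0) then 1 else 0) +
        (if p = (0, 1) then 1 else 0) := by
  obtain ⟨i, j⟩ := p
  simp [MvPowerSeries.coeff_C, MvPowerSeries.coeff_X, Finsupp.ext_iff, Fin.forall_fin_two]

lemma subst2_C_add_X_add_X (a : A) (G K : MvPowerSeries σ A) :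
    subst2 (MvPowerSeries.C (σ := Fin 2) a + MvPowerSeries.X 0 + MvPowerSeries.X 1) G K =
      MvPowerSeries.C a + G + K := by
  classical
  ext m
  change ∑ᶠ p : ℕ × ℕ, _ = _
  rw [finsum_eq_sum_of_support_subset (s := {(0, 0), (1, 0), (0, 1)})]
  · -- `simp` would first reduce `(0, 0).1` and then no longer see `coeff_C_add_X_add_X`
    rw [Finset.sum_insert (by decide), Finset.sum_insert (by decide), Finset.sum_singleton,
      coeff_C_add_X_add_X, coeff_C_add_X_add_X, coeff_C_add_X_add_X]
    simp [MvPowerSeries.coeff_C, MvPowerSeries.coeff_one, add_assoc]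
  · intro p hp
    by_contra hs
    simp only [Finset.coe_insert, Finset.coe_singleton, Set.mem_insert_iff,
      Set.mem_singleton_iff, not_or] at hs
    simp [coeff_C_add_X_add_X, hs.1, hs.2.1, hs.2.2] at hp

lemma coeff_mapCoeffs (f : A → B) (F : MvPowerSeries σ A) (m : σ →₀ ℕ) :
    MvPowerSeries.coeff m (mapCoeffs f F) = f (MvPowerSeries.coeff m F) :=
  rfl

lemma mapCoeffs_C_add_X_add_X {F : Type*} [FunLike F A B] [AddMonoidHomClass F A B] (f : F)
    (hf : f 1 = 1) (a : A) (i j : σ) :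
    mapCoeffs f (MvPowerSeries.C a + MvPowerSeries.X i + MvPowerSeries.X j) =
      MvPowerSeries.C (f a) + MvPowerSeries.X i + MvPowerSeries.X j := by
  classical
  ext m
  simp [coeff_mapCoeffs, MvPowerSeries.coeff_C, MvPowerSeries.coeff_X, apply_ite f, hf]

lemma mul'_comp_rTensor_eq {k : Type*} [CommRing k] [Algebra k A] (f : A →ₗ[k] A) :
    LinearMap.mul' k A ∘ₗ f.rTensor A =
      (LinearMap.mul' k A ∘ₗ f.lTensor A) ∘ₗ (TensorProduct.comm k A A).toLinearMap := by
  ext a b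
  simp [mul_comm]

theorem stmt2_general
    (R : Type*)
    (Rq : Type*) [CommRing Rq]
    (Hq : Type*) [CommRing Hq] [HopfAlgebra Rq Hq]
    (c : Hq ⊗[Rq] Hq) (hsymm : tau Rq Hq c = c)
    (G : MvPowerSeries (Fin 2) (Hq ⊗[Rq] Hq))
    (hG : G = MvPowerSeries.C (σ := Fin 2) (R := Hq ⊗[Rq] Hq) c
        + MvPowerSeries.X 0 + MvPowerSeries.X 1)
    (muS muS' : Hq ⊗[Rq] Hq →ₗ[Rq] Hq)
    (hmuS : muS = LinearMap.mul' Rq Hq ∘ₗ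
      LinearMap.lTensor Hq (HopfAlgebra.antipode (R := Rq)))
    (hmuS' : muS' = LinearMap.mul' Rq Hq ∘ₗ
      LinearMap.rTensor Hq (HopfAlgebra.antipode (R := Rq)))
    (Θ : PowerSeries Hq)
    (hΘ : Θ = -(PowerSeries.C (R := Hq) (muS c)) - PowerSeries.X) :
    subst2 (mapCoeffs (⇑muS) G) (PowerSeries.X : PowerSeries Hq) Θ = 0 ∧
    subst2 (mapCoeffs (⇑muS') G) Θ (PowerSeries.X : PowerSeries Hq) = 0 ∧
    muS c = muS' c := by
  have hsym : muS c = muS' c := by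
    rw [hmuS', mul'_comp_rTensor_eq, ← hmuS, LinearMap.comp_apply]
    exact congrArg muS hsymm.symm
  have hmuS_one : muS 1 = 1 := by simp [hmuS, Algebra.TensorProduct.one_def]
  have hmuS'_one : muS' 1 = 1 := by simp [hmuS', Algebra.TensorProduct.one_def]
  have hΘ_inv : PowerSeries.C (muS c) + PowerSeries.X + Θ = 0 := by
    rw [hΘ]
    ring
  refine ⟨?_, ?_, hsym⟩
  · rw [hG, mapCoeffs_C_add_X_add_X muS hmuS_one, subst2_C_add_X_add_X]
    exact hΘ_inv
  · rw [hG, mapCoeffs_C_add_X_add_X muS' hmuS'_one, subst2_C_add_X_add_X, ← hsym,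
      add_right_comm]
    exact hΘ_inv

/-- for symmetric `c` with `(id⊗ε)c = 0 = (ε⊗id)c`, the series
`Θ(x) = −(μ∘(id⊗S))(c) − x` is an inverse element for `𝔊 = c + x⊗1 + 1⊗x`, and
`(μ∘(id⊗S))(c) = (μ∘(S⊗id))(c)`. -/
theorem stmt2
    (R : Type*) [CommRing R] [NoZeroSMulDivisors ℤ R]
    (H : Type*) [CommRing H] [HopfAlgebra R H]
    (Rq : Type*) [CommRing Rq] [Algebra ℚ Rq]
    (Hq : Type*) [CommRing Hq] [HopfAlgebra Rq Hq] [Algebra ℚ Hq]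
    [IsScalarTower ℚ Rq Hq]
    (ιR : R →+* Rq) (ι : H →+* Hq) (ιι : H ⊗[R] H →+* Hq ⊗[Rq] Hq)
    (halg : ∀ r : R, ι (algebraMap R H r) = algebraMap Rq Hq (ιR r))
    (hιι : ∀ h k : H, ιι (h ⊗ₜ[R] k) = ι h ⊗ₜ[Rq] ι k)
    (hιε : ∀ h : H, Coalgebra.counit (R := Rq) (ι h) = ιR (Coalgebra.counit (R := R) h))
    (hιΔ : ∀ h : H, Coalgebra.comul (R := Rq) (ι h) = ιι (Coalgebra.comul (R := R) h))
    (c : Hq ⊗[Rq] Hq) (hsymm : tau Rq Hq c = c)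
    (hcounit₁ : idCounit Rq Hq c = 0) (hcounit₂ : counitId Rq Hq c = 0)
    (G : MvPowerSeries (Fin 2) (Hq ⊗[Rq] Hq))
    (hG : G = MvPowerSeries.C (σ := Fin 2) (R := Hq ⊗[Rq] Hq) c
        + MvPowerSeries.X 0 + MvPowerSeries.X 1)
    (muS muS' : Hq ⊗[Rq] Hq →ₗ[Rq] Hq)
    (hmuS : muS = LinearMap.mul' Rq Hq ∘ₗ
      LinearMap.lTensor Hq (HopfAlgebra.antipode (R := Rq)))
    (hmuS' : muS' = LinearMap.mul' Rq Hq ∘ₗ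
      LinearMap.rTensor Hq (HopfAlgebra.antipode (R := Rq)))
    (Θ : PowerSeries Hq)
    (hΘ : Θ = -(PowerSeries.C (R := Hq) (muS c)) - PowerSeries.X) :
    subst2 (mapCoeffs (⇑muS) G) (PowerSeries.X : PowerSeries Hq) Θ = 0 ∧
    subst2 (mapCoeffs (⇑muS') G) Θ (PowerSeries.X : PowerSeries Hq) = 0 ∧
    muS c = muS' c :=
  stmt2_general R Rq Hq c hsymm G hG muS muS' hmuS hmuS' Θ hΘ

end FGHopf
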